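/- arXiv:1309.3558 — 5 statements merged into one kernel-verified Lean document; each statement's English description precedes it below -/
import Mathlib

section
/- Let V be a finite-dimensional complex symplectic vector space and G a finite subgroup of Sp(V) generated by symplectic reflections (elements g with rank(1-g)=2). If V decomposes as a direct sum V = V₁ ⊕ V₂ of G-invariant symplectic subspaces, then G = G₁ × G₂ where Gᵢ is the subgroup of G generated by those symplectic reflections acting trivially on the complement V_{3-i}, and Gᵢ acts trivially on V_{3-i}. -/
/-- Skew-symmetry from the alternating property. -/
private lemma srgp_skew {V : Type*} [AddCommGroup V] [Module ℂ V]
    (ω : LinearMap.BilinForm ℂ V) (halt : ∀ v, ω v v = 0) (x y : V) :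
    ω x y = -ω y x := by
  have h := halt (x + y)
  simp only [map_add, LinearMap.add_apply, halt x, halt y, zero_add, add_zero] at h
  linear_combination h

/-- The image of a symplectic invariant subspace under `1 - g` cannot be one-dimensional,
for `g` a finite-order symplectic transformation. -/
private lemma srgp_not_one {V : Type*} [AddCommGroup V] [Module ℂ V] [FiniteDimensional ℂ V]
    (ω : LinearMap.BilinForm ℂ V) (halt : ∀ v, ω v v = 0)
    (g : V ≃ₗ[ℂ] V) (hs : ∀ v w, ω (g v) (g w) = ω v w)
    (hord : ∃ n : ℕ, 0 < n ∧ g ^ n = 1)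
    (W : Submodule ℂ V) (hndW : ∀ v ∈ W, v ≠ 0 → ∃ u ∈ W, ω v u ≠ 0)
    (hinvW : ∀ v ∈ W, g v ∈ W) :
    Module.finrank ℂ (Submodule.map (LinearMap.id - (g : V →ₗ[ℂ] V) : V →ₗ[ℂ] V) W) ≠ 1 := by
  set f : V →ₗ[ℂ] V := (LinearMap.id - (g : V →ₗ[ℂ] V) : V →ₗ[ℂ] V) with hf
  have hfapp : ∀ v : V, f v = v - g v := by
    intro v; simp [hf]
  intro h1
  -- orthogonality of fixed vectors with moved vectors
  have hKR : ∀ k : V, g k = k → ∀ v : V, ω k (v - g v) = 0 := by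
    intro k hk v
    have h' := hs k v
    rw [hk] at h'
    simp [map_sub, h']
  -- get a generator w of the rank-one image
  obtain ⟨⟨w, hwmem⟩, hw0', hgen'⟩ := finrank_eq_one_iff'.mp h1
  have hw0 : w ≠ 0 := by simpa [Submodule.mk_eq_zero] using hw0'
  have hgen : ∀ x ∈ Submodule.map f W, ∃ c : ℂ, c • w = x := by
    intro x hx
    obtain ⟨c, hc⟩ := hgen' ⟨x, hx⟩
    exact ⟨c, congrArg Subtype.val hc⟩
  obtain ⟨x, hxW, hxw⟩ := hwmem
  have hwW : w ∈ W := by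
    rw [← hxw, hfapp]
    exact sub_mem hxW (hinvW x hxW)
  obtain ⟨u, huW, hwu⟩ := hndW w hwW hw0
  obtain ⟨c, hc⟩ := hgen (f u) ⟨u, huW, rfl⟩
  obtain ⟨d, hd⟩ := hgen (f w) ⟨w, hwW, rfl⟩
  rw [hfapp] at hc hd
  -- hc : c • w = u - g u, hd : d • w = w - g w
  have hgu : g u = u - c • w := by rw [hc]; abel
  have hgw : g w = w - d • w := by rw [hd]; abel
  by_cases hdz : d = 0
  · -- g w = w
    have hgw' : g w = w := by rw [hgw, hdz]; simp
    by_cases hcz : c = 0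
    · -- g u = u, so ω u w = 0, contradicting ω w u ≠ 0
      have hgu' : g u = u := by rw [hgu, hcz]; simp
      have h0 : ω u (x - g x) = 0 := hKR u hgu' x
      have hxw' : x - g x = w := by rw [← hxw, hfapp]
      rw [hxw'] at h0
      exact hwu (by rw [srgp_skew ω halt w u, h0, neg_zero])
    · -- g is a transvection on span{w,u}: contradicts finite order
      have hgw'' : ∀ n : ℕ, (g ^ n) w = w := by
        intro n
        induction n with
        | zero => simp
        | succ m ihm =>
          rw [pow_succ]
          show (g ^ m) (g w) = w
          rw [hgw', ihm]
      have hpow : ∀ n : ℕ, (g ^ n) u = u - ((n : ℂ) * c) • w := by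
        intro n
        induction n with
        | zero => simp
        | succ m ihm =>
          rw [pow_succ]
          show (g ^ m) (g u) = u - ((↑(m + 1) : ℂ) * c) • w
          rw [hgu, map_sub, map_smul, ihm, hgw'' m]
          push_cast
          match_scalars <;> ring
      obtain ⟨n, hn, hgn⟩ := hord
      have h1 : (g ^ n) u = u := by rw [hgn]; rfl
      rw [hpow n] at h1
      have h2 : ((n : ℂ) * c) • w = 0 := by
        have := sub_eq_self.mp h1
        exact this
      rcases smul_eq_zero.mp h2 with h | h
      · rcases mul_eq_zero.mp h with h' | h'
        · exact absurd h' (Nat.cast_ne_zero.mpr hn.ne')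
        · exact hcz h'
      · exact hw0 h
  · -- g w = w - d•w with d ≠ 0 : adjust u to a fixed vector u'
    set u' : V := u - (c / d) • w with hu'
    have hgu' : g u' = u' := by
      rw [hu', map_sub, map_smul, hgu, hgw]
      match_scalars
      · ring
      · field_simp
        ring
    have h0 : ω u' (x - g x) = 0 := hKR u' hgu' x
    have hxw' : x - g x = w := by rw [← hxw, hfapp]
    rw [hxw'] at h0
    have : ω w u' = 0 := by rw [srgp_skew ω halt w u', h0, neg_zero]
    rw [hu', map_sub, map_smul] at this
    simp only [halt w, smul_eq_mul, mul_zero, sub_zero] at this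
    exact hwu this


/-- If a finite symplectic reflection group `G < Sp(V)` preserves a decomposition
`V = V₁ ⊕ V₂` into symplectic subspaces, then `G = G₁ × G₂`, where `Gᵢ` is generated by the
symplectic reflections acting trivially on the other summand, and `Gᵢ` acts trivially on the
other summand. -/
theorem symplectic_reflection_group_product
    (V : Type*) [AddCommGroup V] [Module ℂ V] [FiniteDimensional ℂ V]
    (ω : LinearMap.BilinForm ℂ V) (halt : ∀ v, ω v v = 0) (hnd : ω.Nondegenerate)
    (G : Subgroup (V ≃ₗ[ℂ] V)) (hGfin : Finite G)
    (hsymp : ∀ g ∈ G, ∀ v w, ω (g v) (g w) = ω v w)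
    -- `G` is generated by the symplectic reflections it contains:
    (hgen : Subgroup.closure {g : V ≃ₗ[ℂ] V | g ∈ G ∧
        Module.finrank ℂ (LinearMap.range (LinearMap.id - (g : V →ₗ[ℂ] V))) = 2} = G)
    (V₁ V₂ : Submodule ℂ V) (hcompl : IsCompl V₁ V₂)
    -- both summands are symplectic subspaces:
    (hnd1 : ∀ v ∈ V₁, v ≠ 0 → ∃ w ∈ V₁, ω v w ≠ 0)
    (hnd2 : ∀ v ∈ V₂, v ≠ 0 → ∃ w ∈ V₂, ω v w ≠ 0)
    -- both summands are `G`-invariant: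
    (hinv1 : ∀ g ∈ G, ∀ v ∈ V₁, g v ∈ V₁)
    (hinv2 : ∀ g ∈ G, ∀ v ∈ V₂, g v ∈ V₂)
    -- `Gᵢ` is generated by the symplectic reflections of `G` acting trivially on `V_{3-i}`:
    (G₁ G₂ : Subgroup (V ≃ₗ[ℂ] V))
    (hG₁ : G₁ = Subgroup.closure {g : V ≃ₗ[ℂ] V | g ∈ G ∧
        Module.finrank ℂ (LinearMap.range (LinearMap.id - (g : V →ₗ[ℂ] V))) = 2 ∧
        ∀ v ∈ V₂, g v = v})
    (hG₂ : G₂ = Subgroup.closure {g : V ≃ₗ[ℂ] V | g ∈ G ∧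
        Module.finrank ℂ (LinearMap.range (LinearMap.id - (g : V →ₗ[ℂ] V))) = 2 ∧
        ∀ v ∈ V₁, g v = v}) :
    (∀ g ∈ G₁, ∀ v ∈ V₂, g v = v) ∧ (∀ g ∈ G₂, ∀ v ∈ V₁, g v = v) ∧
      (∀ a ∈ G₁, ∀ b ∈ G₂, a * b = b * a) ∧
      G₁ ⊓ G₂ = ⊥ ∧ G₁ ⊔ G₂ = G := by
  -- every element of G has finite order
  have hord : ∀ g ∈ G, ∃ n : ℕ, 0 < n ∧ g ^ n = 1 := by
    intro g hg
    obtain ⟨n, hn, h⟩ := (isOfFinOrder_of_finite (⟨g, hg⟩ : G)).exists_pow_eq_one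
    exact ⟨n, hn, by simpa using congrArg Subtype.val h⟩
  -- every symplectic reflection in G fixes V₁ or V₂ pointwise
  have key : ∀ g ∈ G,
      Module.finrank ℂ (LinearMap.range (LinearMap.id - (g : V →ₗ[ℂ] V))) = 2 →
      (∀ v ∈ V₁, g v = v) ∨ (∀ v ∈ V₂, g v = v) := by
    intro g hg hrk
    set f : V →ₗ[ℂ] V := (LinearMap.id - (g : V →ₗ[ℂ] V) : V →ₗ[ℂ] V) with hf
    have hfapp : ∀ v : V, f v = v - g v := by intro v; simp [hf]
    have hmap1 : Submodule.map f V₁ ≤ V₁ := by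
      rintro _ ⟨v, hv, rfl⟩
      rw [hfapp]; exact sub_mem hv (hinv1 g hg v hv)
    have hmap2 : Submodule.map f V₂ ≤ V₂ := by
      rintro _ ⟨v, hv, rfl⟩
      rw [hfapp]; exact sub_mem hv (hinv2 g hg v hv)
    have hsup : Submodule.map f V₁ ⊔ Submodule.map f V₂ = LinearMap.range f := by
      rw [← Submodule.map_sup, hcompl.sup_eq_top, Submodule.map_top]
    have hdisj : Submodule.map f V₁ ⊓ Submodule.map f V₂ = ⊥ :=
      (hcompl.disjoint.mono hmap1 hmap2).eq_bot
    have hadd : Module.finrank ℂ (Submodule.map f V₁) +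
        Module.finrank ℂ (Submodule.map f V₂) = 2 := by
      have h := Submodule.finrank_sup_add_finrank_inf_eq (Submodule.map f V₁) (Submodule.map f V₂)
      rw [hsup, hdisj, finrank_bot, add_zero, hrk] at h
      omega
    have hn1 : Module.finrank ℂ (Submodule.map f V₁) ≠ 1 :=
      srgp_not_one ω halt g (hsymp g hg) (hord g hg) V₁ hnd1 (fun v hv => hinv1 g hg v hv)
    have hn2 : Module.finrank ℂ (Submodule.map f V₂) ≠ 1 :=
      srgp_not_one ω halt g (hsymp g hg) (hord g hg) V₂ hnd2 (fun v hv => hinv2 g hg v hv)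
    have hcases : Module.finrank ℂ (Submodule.map f V₁) = 0 ∨
        Module.finrank ℂ (Submodule.map f V₂) = 0 := by omega
    rcases hcases with h | h
    · left
      intro v hv
      have hfv : f v = 0 := by
        have hm : f v ∈ Submodule.map f V₁ := ⟨v, hv, rfl⟩
        rw [Submodule.finrank_eq_zero.mp h] at hm
        simpa using hm
      rw [hfapp] at hfv
      exact (sub_eq_zero.mp hfv).symm
    · right
      intro v hv
      have hfv : f v = 0 := by
        have hm : f v ∈ Submodule.map f V₂ := ⟨v, hv, rfl⟩
        rw [Submodule.finrank_eq_zero.mp h] at hm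
        simpa using hm
      rw [hfapp] at hfv
      exact (sub_eq_zero.mp hfv).symm
  -- G₁ fixes V₂ pointwise, G₂ fixes V₁ pointwise
  have hfix1 : ∀ g ∈ G₁, ∀ v ∈ V₂, g v = v := by
    intro g hg
    rw [hG₁] at hg
    refine Subgroup.closure_induction (p := fun x _ => ∀ v ∈ V₂, x v = v)
      (fun x hx => hx.2.2) (fun v _ => rfl) ?_ ?_ hg
    · intro a b _ _ ha hb v hv
      show a (b v) = v
      rw [hb v hv, ha v hv]
    · intro a _ ha v hv
      have h := ha v hv
      show a.symm v = v
      conv_lhs => rw [← h]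
      rw [a.symm_apply_apply]
  have hfix2 : ∀ g ∈ G₂, ∀ v ∈ V₁, g v = v := by
    intro g hg
    rw [hG₂] at hg
    refine Subgroup.closure_induction (p := fun x _ => ∀ v ∈ V₁, x v = v)
      (fun x hx => hx.2.2) (fun v _ => rfl) ?_ ?_ hg
    · intro a b _ _ ha hb v hv
      show a (b v) = v
      rw [hb v hv, ha v hv]
    · intro a _ ha v hv
      have h := ha v hv
      show a.symm v = v
      conv_lhs => rw [← h]
      rw [a.symm_apply_apply]
  have hG₁G : G₁ ≤ G := by
    rw [hG₁]; exact (Subgroup.closure_le _).mpr fun x hx => hx.1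
  have hG₂G : G₂ ≤ G := by
    rw [hG₂]; exact (Subgroup.closure_le _).mpr fun x hx => hx.1
  have hdec : ∀ v : V, ∃ v₁ ∈ V₁, ∃ v₂ ∈ V₂, v₁ + v₂ = v := by
    intro v
    have hv : v ∈ V₁ ⊔ V₂ := by rw [hcompl.sup_eq_top]; exact Submodule.mem_top
    exact Submodule.mem_sup.mp hv
  refine ⟨hfix1, hfix2, ?_, ?_, ?_⟩
  · -- commuting
    intro a ha b hb
    refine LinearEquiv.ext fun v => ?_
    obtain ⟨v₁, hv₁, v₂, hv₂, rfl⟩ := hdec v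
    have h1 : a (b (v₁ + v₂)) = a v₁ + b v₂ := by
      rw [map_add, hfix2 b hb v₁ hv₁, map_add,
        hfix1 a ha (b v₂) (hinv2 b (hG₂G hb) v₂ hv₂)]
    have h2 : b (a (v₁ + v₂)) = a v₁ + b v₂ := by
      rw [map_add, hfix1 a ha v₂ hv₂, map_add,
        hfix2 b hb (a v₁) (hinv1 a (hG₁G ha) v₁ hv₁)]
    show a (b (v₁ + v₂)) = b (a (v₁ + v₂))
    rw [h1, h2]
  · -- trivial intersection
    rw [eq_bot_iff]
    intro g hg
    rw [Subgroup.mem_inf] at hg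
    rw [Subgroup.mem_bot]
    refine LinearEquiv.ext fun v => ?_
    obtain ⟨v₁, hv₁, v₂, hv₂, rfl⟩ := hdec v
    show g (v₁ + v₂) = v₁ + v₂
    rw [map_add, hfix2 g hg.2 v₁ hv₁, hfix1 g hg.1 v₂ hv₂]
  · -- G₁ ⊔ G₂ = G
    apply le_antisymm
    · exact sup_le hG₁G hG₂G
    · rw [← hgen]
      refine (Subgroup.closure_le _).mpr ?_
      rintro g ⟨hgG, hrk⟩
      rcases key g hgG hrk with h | h
      · exact SetLike.le_def.mp le_sup_right
          (by rw [hG₂]; exact Subgroup.subset_closure ⟨hgG, hrk, h⟩)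
      · exact SetLike.le_def.mp le_sup_left
          (by rw [hG₁]; exact Subgroup.subset_closure ⟨hgG, hrk, h⟩)
end

section
/- Let K be a finite group, H a normal subgroup of K, and α an involution of K/H. Let G = G(K,H,α) be the subgroup of the wreath product K ≀ S₂ = K² ⋊ S₂ generated by S₂, H × H, and all elements (k₁, k₂) with k₂H = α(k₁H). Then the subgroup H ≀ S₂ = H² ⋊ S₂ is normal in G if and only if α is the identity automorphism of K/H. -/
/-- The permutation action of `Equiv.Perm ι` on `ι → K`, by group automorphisms. -/
def permAut (ι K : Type*) [Group K] : Equiv.Perm ι →* MulAut (ι → K) where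
  toFun σ := MulEquiv.arrowCongr σ (MulEquiv.refl K)
  map_one' := rfl
  map_mul' σ τ := rfl

/-- The wreath product `K ≀ Sym(ι) = (ι → K) ⋊ Perm ι`. -/
abbrev WreathProduct (ι K : Type*) [Group K] :=
  SemidirectProduct (ι → K) (Equiv.Perm ι) (permAut ι K)

lemma permAut_apply {ι K : Type*} [Group K] (σ : Equiv.Perm ι) (f : ι → K) (i : ι) :
    permAut ι K σ f i = f (σ.symm i) := rfl

/-- The subgroup `H ≀ S₂` described pointwise. -/
def wrH (K : Type*) [Group K] (H : Subgroup K) : Subgroup (WreathProduct (Fin 2) K) where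
  carrier := {w | ∀ i, w.left i ∈ H}
  one_mem' := by intro i; simpa using H.one_mem
  mul_mem' := by
    intro a b ha hb i
    rw [SemidirectProduct.mul_left]
    exact H.mul_mem (ha i) (hb _)
  inv_mem' := by
    intro a ha i
    rw [SemidirectProduct.inv_left, permAut_apply]
    exact H.inv_mem (ha _)

/-- The subgroup of elements whose components are all congruent mod `H`. -/
def wrG (K : Type*) [Group K] (H : Subgroup K) [H.Normal] :
    Subgroup (WreathProduct (Fin 2) K) where
  carrier := {w | ∀ i j, (QuotientGroup.mk (w.left i) : K ⧸ H) = QuotientGroup.mk (w.left j)}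
  one_mem' := by intro i j; rfl
  mul_mem' := by
    intro a b ha hb i j
    rw [SemidirectProduct.mul_left]
    simp only [Pi.mul_apply, permAut_apply, QuotientGroup.mk_mul]
    rw [ha i j, hb (a.right.symm i) (a.right.symm j)]
  inv_mem' := by
    intro a ha i j
    rw [SemidirectProduct.inv_left]
    simp only [permAut_apply, Pi.inv_apply, QuotientGroup.mk_inv]
    rw [ha (a.right⁻¹.symm i) (a.right⁻¹.symm j)]

/-- Let `K` be a finite group, `H ◁ K`, `α` an involution of `K/H`, and
`G = G(K,H,α) < K ≀ S₂` generated by `S₂`, `H × H` and the pairs `(k₁,k₂)` with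
`k₂H = α(k₁H)`.  Then `H ≀ S₂ = H² ⋊ S₂` is normal in `G` iff `α = id`. -/
theorem HwrS2_normal_iff (K : Type*) [Group K] [Finite K] (H : Subgroup K) [H.Normal]
    (α : (K ⧸ H) ≃* (K ⧸ H)) (hα : ∀ x, α (α x) = x)
    (G N : Subgroup (WreathProduct (Fin 2) K))
    (hG : G = Subgroup.closure
      ({w | w.left = 1} ∪ {w | w.right = 1 ∧ w.left 0 ∈ H ∧ w.left 1 ∈ H} ∪
        {w | w.right = 1 ∧
          (QuotientGroup.mk (w.left 1) : K ⧸ H) = α (QuotientGroup.mk (w.left 0))}))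
    (hN : N = Subgroup.closure
      ({w | w.left = 1} ∪ {w | w.right = 1 ∧ w.left 0 ∈ H ∧ w.left 1 ∈ H})) :
    (∀ g ∈ G, ∀ x ∈ N, g * x * g⁻¹ ∈ N) ↔ α = MulEquiv.refl (K ⧸ H) := by
  -- First, identify `N` with the pointwise description `wrH K H`.
  have hN' : N = wrH K H := by
    rw [hN]
    apply le_antisymm
    · rw [Subgroup.closure_le]
      rintro w (hw | hw)
      · intro i; rw [hw]; exact H.one_mem
      · intro i
        fin_cases i
        exacts [hw.2.1, hw.2.2]
    · intro w hw
      have hdec : w = ⟨w.left, 1⟩ * ⟨1, w.right⟩ := by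
        ext <;> simp [SemidirectProduct.mul_left, SemidirectProduct.mul_right]
      rw [hdec]
      apply mul_mem
      · exact Subgroup.subset_closure (Or.inr ⟨rfl, hw 0, hw 1⟩)
      · exact Subgroup.subset_closure (Or.inl rfl)
  constructor
  · -- normality ⇒ α = id
    intro hnorm
    ext x
    obtain ⟨k, rfl⟩ := QuotientGroup.mk_surjective x
    obtain ⟨k', hk'⟩ := QuotientGroup.mk_surjective (α (QuotientGroup.mk k))
    set g : WreathProduct (Fin 2) K := ⟨![k, k'], 1⟩ with hg
    have hgG : g ∈ G := by
      rw [hG]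
      apply Subgroup.subset_closure
      right
      refine ⟨rfl, ?_⟩
      simp [hg, hk']
    set x0 : WreathProduct (Fin 2) K := ⟨1, Equiv.swap 0 1⟩ with hx0
    have hxN : x0 ∈ N := by
      rw [hN]
      exact Subgroup.subset_closure (Or.inl rfl)
    have hconj := hnorm g hgG x0 hxN
    rw [hN'] at hconj
    have h0 := hconj 0
    have hleft : (g * x0 * g⁻¹).left 0 = k * k'⁻¹ := by
      simp [hg, hx0, SemidirectProduct.mul_left, SemidirectProduct.inv_left,
        permAut_apply]
    rw [hleft] at h0
    have : (QuotientGroup.mk k : K ⧸ H) = QuotientGroup.mk k' := by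
      have h2 := (QuotientGroup.eq_one_iff (k * k'⁻¹)).mpr h0
      rw [QuotientGroup.mk_mul, QuotientGroup.mk_inv] at h2
      exact mul_inv_eq_one.mp h2
    simp only [MulEquiv.refl_apply]
    rw [← hk', ← this]
  · -- α = id ⇒ normality
    intro hα_id
    subst hα_id
    have hG' : G ≤ wrG K H := by
      rw [hG, Subgroup.closure_le]
      rintro w ((hw | hw) | hw)
      · intro i j; rw [hw]; rfl
      · have h : ∀ i : Fin 2, (QuotientGroup.mk (w.left i) : K ⧸ H) = 1 := fun i =>
          match i with
          | 0 => (QuotientGroup.eq_one_iff _).mpr hw.2.1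
          | 1 => (QuotientGroup.eq_one_iff _).mpr hw.2.2
        intro i j; rw [h i, h j]
      · have h : ∀ i : Fin 2,
            (QuotientGroup.mk (w.left i) : K ⧸ H) = QuotientGroup.mk (w.left 0) := fun i =>
          match i with
          | 0 => rfl
          | 1 => by simpa using hw.2
        intro i j; rw [h i, h j]
    intro g hg x hx
    rw [hN'] at hx ⊢
    have hgc := hG' hg
    intro i
    rw [SemidirectProduct.mul_left, SemidirectProduct.inv_left,
      SemidirectProduct.mul_left, SemidirectProduct.mul_right]
    simp only [Pi.mul_apply, permAut_apply, Pi.inv_apply]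
    rw [← QuotientGroup.eq_one_iff]
    simp only [QuotientGroup.mk_mul, QuotientGroup.mk_inv]
    rw [(QuotientGroup.eq_one_iff _).mpr (hx _), mul_one]
    exact mul_inv_eq_one.mpr (hgc _ _)
end

section
/- Let Γ be a finite subgroup of PSL₂(ℂ) and p ∈ ℙ¹ a point with nontrivial stabilizer. Then Stab_Γ(p) is a maximal cyclic subgroup of Γ: it is cyclic and is not properly contained in any other cyclic subgroup of Γ. -/
set_option synthInstance.maxHeartbeats 400000

open Matrix Projectivization

/-- The special linear group `SL₂(ℂ)`. -/
abbrev SL2 : Type := Matrix.SpecialLinearGroup (Fin 2) ℂ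

/-- The complex projective line `ℙ¹`. -/
abbrev ProjLine : Type := Projectivization ℂ (Fin 2 → ℂ)

lemma projmk_congr {v w : Fin 2 → ℂ} (hv : v ≠ 0) (hw : w ≠ 0) (h : v = w) :
    Projectivization.mk ℂ v hv = Projectivization.mk ℂ w hw := by subst h; rfl

/-- The Möbius action of `SL₂(ℂ)` on `ℙ¹`. -/
noncomputable instance : MulAction SL2 ProjLine where
  smul A p := Projectivization.map (Matrix.SpecialLinearGroup.toLin' A).toLinearMap
      (Matrix.SpecialLinearGroup.toLin' A).injective p
  one_smul p := by
    induction p using Projectivization.ind with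
    | h v hv =>
      show Projectivization.map _ _ _ = _
      rw [Projectivization.map_mk]
      exact projmk_congr _ _ (by rw [_root_.map_one]; rfl)
  mul_smul A B p := by
    induction p using Projectivization.ind with
    | h v hv =>
      show Projectivization.map _ _ _ =
        Projectivization.map _ _ (Projectivization.map _ _ _)
      rw [Projectivization.map_mk, Projectivization.map_mk, Projectivization.map_mk]
      exact projmk_congr _ _ (by rw [_root_.map_mul]; rfl)

lemma center_smul_eq (z : SL2) (hz : z ∈ Subgroup.center SL2) (p : ProjLine) : z • p = p := by
  obtain ⟨r, hr, hrz⟩ := Matrix.SpecialLinearGroup.mem_center_iff.mp hz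
  have hr0 : r ≠ 0 := by
    intro h; rw [h] at hr; simp at hr
  induction p using Projectivization.ind with
  | h v hv =>
    show Projectivization.map _ _ _ = _
    rw [Projectivization.map_mk, Projectivization.mk_eq_mk_iff']
    refine ⟨r, ?_⟩
    have h1 : (Matrix.SpecialLinearGroup.toLin' z).toLinearMap v
        = (z : Matrix (Fin 2) (Fin 2) ℂ) *ᵥ v := rfl
    rw [h1, ← hrz]
    show _ = (Matrix.scalar (Fin 2)) r *ᵥ v
    funext i
    simp [Matrix.scalar_apply, Matrix.mulVec_diagonal]

/-- The projective special linear group `PSL₂(ℂ)`. -/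
abbrev PSL2 : Type := SL2 ⧸ Subgroup.center SL2

/-- The Möbius action of `PSL₂(ℂ)` on `ℙ¹`. -/
noncomputable instance : MulAction PSL2 ProjLine where
  smul q p := Quotient.liftOn' q (fun A => A • p) (fun a b hab => by
    rw [QuotientGroup.leftRel_apply] at hab
    show a • p = b • p
    conv_rhs => rw [show b = a * (a⁻¹ * b) by group]
    rw [mul_smul, center_smul_eq _ hab])
  one_smul p := one_smul (M := SL2) p
  mul_smul q r p := by
    induction q using Quotient.inductionOn' with
    | h a =>
      induction r using Quotient.inductionOn' with
      | h b => exact mul_smul (α := SL2) a b p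

/-!
Lift to `SL₂(ℂ)`. An element `A` fixing `p` acts on a representative `v` of `p` by a scalar, and
`A ↦` (this scalar) is a homomorphism on the stabilizer of `p` in `SL₂(ℂ)`. On a finite group it
is injective: if `A v = v` then `A` has trace `2`, so `(A - 1)² = 0` by Cayley–Hamilton, and
`Aⁿ = 1 + n (A - 1)` forces `A = 1`. Hence the preimage of `Stab_Γ(p)`, finite because the centre
`{±1}` is, embeds in `ℂˣ` and is cyclic, and so is its image.

For maximality, write `C = ⟨g⟩` and pick `s = gᵏ ≠ 1` in `Stab_Γ(p)`. A lift `Gᵏ` of `s` is not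
scalar, so its eigenspaces in `ℂ²` are lines; the lift `G` commutes with `Gᵏ` and hence preserves
the eigenline `p`. So `g` fixes `p` and `C ≤ Stab_Γ(p)`.
-/

lemma QuotientGroup.finite_comap_mk' {G : Type*} [Group G] (N : Subgroup G) [N.Normal] [Finite N]
    (S : Subgroup (G ⧸ N)) [Finite S] : Finite (S.comap (QuotientGroup.mk' N)) := by
  let f := (QuotientGroup.mk' N).subgroupComap S
  refine f.finite_iff_finite_ker_range.mpr ⟨?_, inferInstance⟩
  refine Finite.of_injective (β := N) (fun x => ⟨x.1.1, ?_⟩) fun x y h => ?_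
  · exact (QuotientGroup.eq_one_iff _).mp (congrArg Subtype.val x.2)
  · exact Subtype.val_injective (Subtype.val_injective (congrArg Subtype.val h :))

lemma one_add_pow_of_mul_self_eq_zero {R : Type*} [Ring R] {N : R} (hN : N * N = 0) (n : ℕ) :
    (1 + N) ^ n = 1 + n • N := by
  induction n with
  | zero => simp
  | succ n ih =>
    rw [pow_succ, ih, add_mul, mul_add, smul_mul_assoc, mul_add, hN, succ_nsmul]
    simp only [mul_one, one_mul, add_zero]
    abel

namespace Matrix

variable {K : Type*} [Field K]

lemma exists_mulVec_eq_smul_of_commute {A B : Matrix (Fin 2) (Fin 2) K} (hAB : Commute A B)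
    (hA : ∀ r : K, A ≠ scalar (Fin 2) r) {v : Fin 2 → K} (hv : v ≠ 0) {μ : K}
    (hAv : A *ᵥ v = μ • v) : ∃ c : K, B *ᵥ v = c • v := by
  set E := Module.End.eigenspace (toLin' A) μ
  have mem_E (w : Fin 2 → K) : w ∈ E ↔ A *ᵥ w = μ • w := by simp [E]
  have hE : E ≠ ⊤ := fun h => hA μ <| toLin'.injective <| LinearMap.ext fun w => by
    simpa using (mem_E w).mp (h ▸ Submodule.mem_top)
  have hvE : v ∈ E := (mem_E v).mpr hAv
  have hBvE : B *ᵥ v ∈ E := by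
    rw [mem_E, mulVec_mulVec, hAB.eq, ← mulVec_mulVec, hAv, mulVec_smul]
  have hrank : Module.finrank K E = 1 := by
    have hlt : Module.finrank K E < 2 := by simpa using Submodule.finrank_lt hE
    have hpos : 1 ≤ Module.finrank K E :=
      Submodule.one_le_finrank_iff.mpr ((Submodule.ne_bot_iff E).mpr ⟨v, hvE, hv⟩)
    omega
  obtain ⟨c, hc⟩ := (finrank_eq_one_iff_of_nonzero' (⟨v, hvE⟩ : E) (by simpa using hv)).mp
    hrank ⟨B *ᵥ v, hBvE⟩
  exact ⟨c, (congrArg Subtype.val hc).symm⟩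

lemma mul_self_eq_trace_smul_sub_det_smul {R : Type*} [CommRing R] (M : Matrix (Fin 2) (Fin 2) R) :
    M * M = M.trace • M - M.det • 1 := by
  ext i j
  fin_cases i <;> fin_cases j <;>
    simp only [Fin.zero_eta, Fin.mk_one, Fin.isValue, mul_apply, Fin.sum_univ_two, trace_fin_two,
      det_fin_two, sub_apply, smul_apply, smul_eq_mul, one_apply_eq, one_apply_ne, ne_eq,
      zero_ne_one, one_ne_zero, not_false_eq_true, mul_one, mul_zero, sub_zero] <;> ring

lemma det_sub_one_fin_two {R : Type*} [CommRing R] (M : Matrix (Fin 2) (Fin 2) R) :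
    (M - 1).det = M.det - M.trace + 1 := by
  simp only [det_fin_two, trace_fin_two, sub_apply, one_apply_eq, one_apply_ne, ne_eq,
    zero_ne_one, one_ne_zero, not_false_eq_true, sub_zero]
  ring

lemma eq_one_of_pow_eq_one_of_mulVec_eq_self [CharZero K] {A : Matrix (Fin 2) (Fin 2) K}
    (hdet : A.det = 1) {v : Fin 2 → K} (hv : v ≠ 0) (hAv : A *ᵥ v = v) {n : ℕ} (hn : n ≠ 0)
    (hpow : A ^ n = 1) : A = 1 := by
  set N := A - 1
  have hdetN : N.det = 0 := exists_mulVec_eq_zero_iff.mp ⟨v, hv, by simp [N, sub_mulVec, hAv]⟩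
  have htrN : N.trace = 0 := by
    have := det_sub_one_fin_two A
    simp only [N, trace_sub, trace_one, Fintype.card_fin] at hdetN ⊢
    push_cast
    linear_combination this - hdetN + hdet
  have hNN : N * N = 0 := by simp [mul_self_eq_trace_smul_sub_det_smul N, hdetN, htrN]
  have hnN : (n : K) • N = 0 := by
    rw [Nat.cast_smul_eq_nsmul]
    simpa [N, hpow] using (one_add_pow_of_mul_self_eq_zero hNN n).symm
  rw [← sub_eq_zero]
  exact (smul_eq_zero.mp hnN).resolve_left (Nat.cast_ne_zero.mpr hn)

end Matrix

namespace SL2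

lemma smul_mk_eq_self_iff {A : SL2} {v : Fin 2 → ℂ} (hv : v ≠ 0) :
    A • mk ℂ v hv = mk ℂ v hv ↔ ∃ c : ℂ, (A : Matrix (Fin 2) (Fin 2) ℂ) *ᵥ v = c • v := by
  change Projectivization.map (SpecialLinearGroup.toLin' A).toLinearMap _ _ = _ ↔ _
  rw [Projectivization.map_mk, Projectivization.mk_eq_mk_iff']
  exact exists_congr fun _ => eq_comm

lemma smul_eq_self_iff {A : SL2} {p : ProjLine} :
    A • p = p ↔ ∃ c : ℂ, (A : Matrix (Fin 2) (Fin 2) ℂ) *ᵥ p.rep = c • p.rep := by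
  rw [← smul_mk_eq_self_iff p.rep_nonzero, p.mk_rep]

noncomputable def stabilizerEigenvalue (p : ProjLine) : MulAction.stabilizer SL2 p →* ℂ where
  toFun A := (smul_eq_self_iff.mp A.2).choose
  map_one' := smul_left_injective ℂ p.rep_nonzero <| by
    dsimp only
    rw [← (smul_eq_self_iff.mp (1 : MulAction.stabilizer SL2 p).2).choose_spec]
    simp
  map_mul' A B := smul_left_injective ℂ p.rep_nonzero <| by
    dsimp only
    rw [← (smul_eq_self_iff.mp (A * B).2).choose_spec, mul_comm, ← smul_smul,
      ← (smul_eq_self_iff.mp A.2).choose_spec, ← mulVec_smul,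
      ← (smul_eq_self_iff.mp B.2).choose_spec, mulVec_mulVec]
    rfl

lemma mulVec_rep_eq_stabilizerEigenvalue_smul {p : ProjLine} (A : MulAction.stabilizer SL2 p) :
    ((A : SL2) : Matrix (Fin 2) (Fin 2) ℂ) *ᵥ p.rep = stabilizerEigenvalue p A • p.rep :=
  (smul_eq_self_iff.mp A.2).choose_spec

lemma isCyclic_of_le_stabilizer {p : ProjLine} (H : Subgroup SL2) [Finite H]
    (hH : H ≤ MulAction.stabilizer SL2 p) : IsCyclic H := by
  refine isCyclic_of_injective_ringHom ((stabilizerEigenvalue p).comp (Subgroup.inclusion hH))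
    ((injective_iff_map_eq_one _).mpr fun A hA => ?_)
  have hAp : ((A : SL2) : Matrix (Fin 2) (Fin 2) ℂ) *ᵥ p.rep = p.rep := by
    have := mulVec_rep_eq_stabilizerEigenvalue_smul (Subgroup.inclusion hH A)
    rwa [show stabilizerEigenvalue p (Subgroup.inclusion hH A) = 1 from hA, one_smul] at this
  have hpow : ((A : SL2) : Matrix (Fin 2) (Fin 2) ℂ) ^ orderOf A = 1 := by
    exact_mod_cast congrArg (fun B : H => ((B : SL2) : Matrix (Fin 2) (Fin 2) ℂ))
      (pow_orderOf_eq_one A)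
  exact Subtype.ext <| Subtype.ext <| eq_one_of_pow_eq_one_of_mulVec_eq_self (A : SL2).2
    p.rep_nonzero hAp (orderOf_pos A).ne' hpow

lemma coe_ne_scalar_of_notMem_center {A : SL2} (hA : A ∉ Subgroup.center SL2) (r : ℂ) :
    (A : Matrix (Fin 2) (Fin 2) ℂ) ≠ scalar (Fin 2) r := by
  refine fun h => hA (Matrix.SpecialLinearGroup.mem_center_iff.mpr ⟨r, ?_, h.symm⟩)
  simpa [h, det_diagonal] using A.2

lemma smul_eq_self_of_commute {A B : SL2} (hAB : Commute A B) (hA : A ∉ Subgroup.center SL2)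
    {p : ProjLine} (hAp : A • p = p) : B • p = p := by
  obtain ⟨μ, hμ⟩ := smul_eq_self_iff.mp hAp
  exact smul_eq_self_iff.mpr <| exists_mulVec_eq_smul_of_commute
    (congrArg Subtype.val hAB.eq) (coe_ne_scalar_of_notMem_center hA) p.rep_nonzero hμ

end SL2

namespace PSL2

lemma isCyclic_of_le_stabilizer {p : ProjLine} (S : Subgroup PSL2) [Finite S]
    (hS : S ≤ MulAction.stabilizer PSL2 p) : IsCyclic S := by
  have : Finite (Subgroup.center SL2) :=
    (SpecialLinearGroup.center_equiv_rootsOfUnity' 0).finite_iff.mpr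
      (by rw [Fintype.card_fin]; infer_instance)
  have : Finite (S.comap (QuotientGroup.mk' _)) := QuotientGroup.finite_comap_mk' _ S
  have : IsCyclic (S.comap (QuotientGroup.mk' _)) :=
    SL2.isCyclic_of_le_stabilizer _ fun A hA => hS hA
  exact isCyclic_of_surjective _ <| MonoidHom.subgroupComap_surjective_of_surjective _ S
    (QuotientGroup.mk'_surjective _)

lemma mem_stabilizer_of_zpow_mem_stabilizer {p : ProjLine} {g : PSL2} {k : ℤ} (hk : g ^ k ≠ 1)
    (hgk : g ^ k ∈ MulAction.stabilizer PSL2 p) : g ∈ MulAction.stabilizer PSL2 p := by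
  obtain ⟨G, rfl⟩ := QuotientGroup.mk_surjective g
  -- Commuting elements of `PSL₂` only have lifts commuting up to sign; `G` and `G ^ k` commute.
  rw [← QuotientGroup.mk_zpow] at hk hgk
  exact SL2.smul_eq_self_of_commute (Commute.self_zpow G k).symm
    (mt (QuotientGroup.eq_one_iff _).mpr hk) hgk

end PSL2

/-- For a finite subgroup `Γ < PSL₂(ℂ)` and `p ∈ ℙ¹` with nontrivial
stabilizer, the stabilizer `Stab_Γ(p)` is a maximal cyclic subgroup of `Γ`: it is cyclic,
and no cyclic subgroup of `Γ` properly contains it. -/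
theorem stabilizer_maximal_cyclic (Γ : Subgroup PSL2) (hΓ : Finite Γ) (p : ProjLine)
    (S : Subgroup PSL2) (hS : S = Γ ⊓ MulAction.stabilizer PSL2 p) (hne : S ≠ ⊥) :
    IsCyclic ↥S ∧ ∀ C : Subgroup PSL2, C ≤ Γ → IsCyclic ↥C → S ≤ C → C = S := by
  have hSΓ : S ≤ Γ := hS ▸ inf_le_left
  have hSp : S ≤ MulAction.stabilizer PSL2 p := hS ▸ inf_le_right
  have : Finite S := Finite.of_injective _ (Subgroup.inclusion_injective hSΓ)
  refine ⟨PSL2.isCyclic_of_le_stabilizer S hSp, fun C hCΓ hC hSC => le_antisymm ?_ hSC⟩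
  obtain ⟨s, hsS, hs⟩ := (Subgroup.bot_or_exists_ne_one S).resolve_left hne
  obtain ⟨g, rfl⟩ := (Subgroup.isCyclic_iff_exists_zpowers_eq_top C).mp hC
  obtain ⟨k, rfl⟩ := Subgroup.mem_zpowers_iff.mp (hSC hsS)
  have hg : g ∈ MulAction.stabilizer PSL2 p :=
    PSL2.mem_stabilizer_of_zpow_mem_stabilizer hs (hSp hsS)
  rw [hS]
  exact le_inf hCΓ (Subgroup.zpowers_le.mpr hg)
end

section
/- With D and t as above (D = diag(ζ^{2i}, ζ^{−2i}, ζ^{2ia}, ζ^{−2ia}), t the block swap matrix), the element D·t ∈ GL₄(ℂ) is a symplectic reflection (i.e., rank(1 − D·t) = 2) if and only if ζ^{2i(a+1)} + ζ^{−2i(a+1)} = 2, equivalently i(a+1) ≡ 0 (mod m). -/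
open Matrix

/-- With `D = diag(ζ^{2i}, ζ^{−2i}, ζ^{2ia}, ζ^{−2ia})` and `t` the block swap
matrix, `D·t` is a symplectic reflection (rank(1 − D·t) = 2) iff
`ζ^{2i(a+1)} + ζ^{−2i(a+1)} = 2`, equivalently `i(a+1) ≡ 0 (mod m)`. -/
theorem Dt_symplectic_reflection_iff (m : ℕ) (hm : 0 < m) (ζ : ℂ)
    (hζ : IsPrimitiveRoot ζ (2 * m)) (i a : ℤ) (ha : IsCoprime a (2 * (m : ℤ)))
    (D : Matrix (Fin 4) (Fin 4) ℂ)
    (hD : D = Matrix.diagonal ![ζ ^ (2 * i), ζ ^ (-(2 * i)), ζ ^ (2 * i * a), ζ ^ (-(2 * i * a))])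
    (t : Matrix (Fin 4) (Fin 4) ℂ)
    (ht : t = !![0, 0, 1, 0; 0, 0, 0, 1; 1, 0, 0, 0; 0, 1, 0, 0]) :
    ((1 - D * t).rank = 2 ↔ ζ ^ (2 * i * (a + 1)) + ζ ^ (-(2 * i * (a + 1))) = 2) ∧
      (ζ ^ (2 * i * (a + 1)) + ζ ^ (-(2 * i * (a + 1))) = 2 ↔ (m : ℤ) ∣ i * (a + 1)) := by
  have hζ0 : ζ ≠ 0 := hζ.ne_zero (by positivity)
  set α : ℂ := ζ ^ (2 * i) with hα
  set β : ℂ := ζ ^ (2 * i * a) with hβ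
  have hα0 : α ≠ 0 := zpow_ne_zero _ hζ0
  have hβ0 : β ≠ 0 := zpow_ne_zero _ hζ0
  have hL : ζ ^ (2 * i * (a + 1)) = α * β := by
    rw [hα, hβ, ← zpow_add₀ hζ0]; ring_nf
  have hLinv : ζ ^ (-(2 * i * (a + 1))) = (α * β)⁻¹ := by
    rw [_root_.zpow_neg, hL]
  have h0 : α * β ≠ 0 := mul_ne_zero hα0 hβ0
  have key2 : α * β + (α * β)⁻¹ = 2 ↔ α * β = 1 := by
    constructor
    · intro h
      have h2 : (α * β + (α * β)⁻¹) * (α * β) = 2 * (α * β) := by rw [h]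
      have h3 : (α * β)⁻¹ * (α * β) = 1 := inv_mul_cancel₀ h0
      have h1 : (α * β - 1) ^ 2 = 0 := by linear_combination h2 - h3
      have h4 := sq_eq_zero_iff.mp h1
      exact sub_eq_zero.mp h4
    · intro h; rw [h]; norm_num
  -- the explicit matrix
  have hM : 1 - D * t = !![1, 0, -α, 0; 0, 1, 0, -α⁻¹; -β, 0, 1, 0; 0, -β⁻¹, 0, 1] := by
    subst hD ht
    ext r c
    fin_cases r <;> fin_cases c <;>
      simp [Matrix.mul_apply, Fin.sum_univ_four, Matrix.one_apply, _root_.zpow_neg, hα, hβ,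
        Matrix.vecHead, Matrix.vecTail]
  have hrank : (1 - D * t).rank = 2 ↔ α * β = 1 := by
    rw [hM]
    constructor
    · intro hr
      by_contra hne
      have hne' : (α * β)⁻¹ ≠ 1 := by
        intro h; exact hne (by rw [← inv_inv (α * β), h, inv_one])
      have hdet : (!![1, 0, -α, 0; 0, 1, 0, -α⁻¹; -β, 0, 1, 0; 0, -β⁻¹, 0, 1]).det
          = (1 - α * β) * (1 - (α * β)⁻¹) := by
        simp [Matrix.det_succ_row_zero, Fin.sum_univ_succ, Fin.succAbove,
          Matrix.vecHead, Matrix.vecTail]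
        field_simp
        ring
      have hu : IsUnit (!![1, 0, -α, 0; 0, 1, 0, -α⁻¹; -β, 0, 1, 0; 0, -β⁻¹, 0, 1]) := by
        rw [Matrix.isUnit_iff_isUnit_det, hdet]
        exact (IsUnit.mul (isUnit_iff_ne_zero.mpr (sub_ne_zero.mpr (Ne.symm hne)))
          (isUnit_iff_ne_zero.mpr (sub_ne_zero.mpr (Ne.symm hne'))))
      rw [Matrix.rank_of_isUnit _ hu] at hr
      simp at hr
    · intro h1
      have hβα : β = α⁻¹ := eq_inv_of_mul_eq_one_right h1
      have hβinv : β⁻¹ = α := by rw [hβα, inv_inv]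
      set B : Matrix (Fin 4) (Fin 2) ℂ := !![1, 0; 0, 1; -α⁻¹, 0; 0, -α] with hB
      set C : Matrix (Fin 2) (Fin 4) ℂ := !![1, 0, -α, 0; 0, 1, 0, -α⁻¹] with hC
      set M : Matrix (Fin 4) (Fin 4) ℂ :=
        !![1, 0, -α, 0; 0, 1, 0, -α⁻¹; -β, 0, 1, 0; 0, -β⁻¹, 0, 1] with hMdef
      have hBC : M = B * C := by
        rw [hMdef, hB, hC]
        ext r c
        fin_cases r <;> fin_cases c <;>
          simp [Matrix.mul_apply, Fin.sum_univ_two, hβα, hβinv] <;>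
          field_simp
      have hupper : M.rank ≤ 2 := by
        rw [hBC]
        refine (Matrix.rank_mul_le_right B C).trans ?_
        simpa using C.rank_le_card_height
      have hCMB : C * (M * B) = (4 : ℂ) • 1 := by
        ext r c
        fin_cases r <;> fin_cases c <;>
          simp [hMdef, hB, hC, Matrix.mul_apply, Fin.sum_univ_two, Fin.sum_univ_four,
              Matrix.one_apply, hβα, hβinv] <;>
          field_simp <;> ring
      have hrank4 : ((4 : ℂ) • (1 : Matrix (Fin 2) (Fin 2) ℂ)).rank = 2 := by
        rw [Matrix.rank_of_isUnit]
        · simp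
        · rw [Matrix.isUnit_iff_isUnit_det]
          simp [Matrix.det_smul]
      have hlower : 2 ≤ M.rank := by
        calc 2 = (C * (M * B)).rank := by rw [hCMB, hrank4]
          _ ≤ (M * B).rank := Matrix.rank_mul_le_right _ _
          _ ≤ M.rank := Matrix.rank_mul_le_left _ _
      omega
  have hdvd : ((2 * m : ℕ) : ℤ) ∣ 2 * i * (a + 1) ↔ (m : ℤ) ∣ i * (a + 1) := by
    push_cast
    rw [mul_assoc]
    exact mul_dvd_mul_iff_left two_ne_zero
  constructor
  · rw [hL, hLinv, key2, hrank]
  · rw [hL, hLinv, key2, ← hL, hζ.zpow_eq_one_iff_dvd, hdvd]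
end

section
/- Let Γ = {1,g,h,gh} ≅ C₂×C₂ act on ℙ¹ as above, and let G₃({1},Γ) be the subgroup of Γ ≀ S₃ generated by S₃ and by {(x₁,x₂,x₃) ∈ Γ³ : x₁x₂x₃ = 1}. Then the stabilizer in G₃({1},Γ) of the point p = ([1:0],[1:i],[1:1]) ∈ (ℙ¹)³ is exactly {(1,1,1), (g,h,gh)}, a group of order 2. -/
set_option synthInstance.maxHeartbeats 400000

open Matrix Projectivization

lemma vec_ne_zero_left (a b : ℂ) (ha : a ≠ 0) : ![a, b] ≠ 0 :=
  fun hc => ha (by simpa using congrFun hc 0)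

/-- The image in `PSL₂(ℂ)` of the matrix `[[i,0],[0,−i]]`. -/
noncomputable def gP : PSL2 :=
  QuotientGroup.mk (⟨!![Complex.I, 0; 0, -Complex.I], by
    simp [Matrix.det_fin_two_of, Complex.I_mul_I]⟩ : SL2)

/-- The image in `PSL₂(ℂ)` of the matrix `[[0,1],[−1,0]]`. -/
noncomputable def hP : PSL2 :=
  QuotientGroup.mk (⟨!![0, 1; -1, 0], by norm_num [Matrix.det_fin_two_of]⟩ : SL2)

/-- The point `[a : b] ∈ ℙ¹` (where `a ≠ 0`). -/
noncomputable def pt (a b : ℂ) (ha : a ≠ 0) : ProjLine :=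
  Projectivization.mk ℂ ![a, b] (vec_ne_zero_left a b ha)

/-- The point `[0 : 1] ∈ ℙ¹`. -/
noncomputable def pt01 : ProjLine :=
  Projectivization.mk ℂ ![0, 1] (fun hc => (one_ne_zero : (1 : ℂ) ≠ 0) (by simpa using congrFun hc 1))

/-! The element `g` acts on `ℙ¹` by `[1:b] ↦ [1:-b]` and `h` by `[1:b] ↦ [1:-1/b]`, so the
`Γ`-orbits of the three coordinates of `p` are `{[1:0], [0:1]}`, `{[1:i], [1:-i]}` and
`{[1:1], [1:-1]}`. They are pairwise disjoint, which forces the permutation part of a stabilizing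
element to be trivial; then each `f k` lies in the stabilizer `{1, γ k}` of `p k`, where
`γ = (g, h, gh)`. Of these eight triples only `(1,1,1)` and `(g,h,gh)` have product `1`: every
other product moves `[1:0]` or `[1:1]`. -/

lemma forall_smul_perm_inv_eq_iff {G X ι : Type*} [SMul G X] {p : ι → X} {f : ι → G}
    {σ : Equiv.Perm ι} (hsep : ∀ i j, f i • p j = p i → j = i) :
    (∀ i, f i • p (σ⁻¹ i) = p i) ↔ σ = 1 ∧ ∀ i, f i • p i = p i := by
  refine ⟨fun h => ?_, fun ⟨hσ, h⟩ => by simpa [hσ] using h⟩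
  obtain rfl : σ = 1 := inv_eq_one.mp <| Equiv.ext fun i => hsep i _ (h i)
  simpa using h

lemma mk_smul_mk_of_mulVec_eq_smul (A : SL2) {v w : Fin 2 → ℂ} (hv : v ≠ 0) (hw : w ≠ 0)
    {a : ℂ} (h : (A : Matrix (Fin 2) (Fin 2) ℂ) *ᵥ v = a • w) :
    (QuotientGroup.mk A : PSL2) • Projectivization.mk ℂ v hv = Projectivization.mk ℂ w hw := by
  show Projectivization.map (Matrix.SpecialLinearGroup.toLin' A).toLinearMap
    (Matrix.SpecialLinearGroup.toLin' A).injective (Projectivization.mk ℂ v hv) = _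
  rw [Projectivization.map_mk, Projectivization.mk_eq_mk_iff']
  exact ⟨a, h.symm⟩

@[simp] lemma pt_one_inj {b c : ℂ} : pt 1 b one_ne_zero = pt 1 c one_ne_zero ↔ b = c := by
  refine ⟨fun h => ?_, fun h => h ▸ rfl⟩
  obtain ⟨a, ha⟩ := (Projectivization.mk_eq_mk_iff' ..).mp h
  have h0 := congrFun ha 0
  have h1 := congrFun ha 1
  simp only [Fin.isValue, Matrix.cons_val_zero, Matrix.cons_val_one, Pi.smul_apply,
    smul_eq_mul, mul_one] at h0 h1
  rw [← h1, h0, one_mul]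

@[simp] lemma pt_ne_pt01 (b : ℂ) : pt 1 b one_ne_zero ≠ pt01 := fun h => by
  obtain ⟨a, ha⟩ := (Projectivization.mk_eq_mk_iff' ..).mp h
  simpa using congrFun ha 0

@[simp] lemma pt01_ne_pt (b : ℂ) : pt01 ≠ pt 1 b one_ne_zero := (pt_ne_pt01 b).symm

@[simp] lemma gP_smul_pt (b : ℂ) : gP • pt 1 b one_ne_zero = pt 1 (-b) one_ne_zero :=
  mk_smul_mk_of_mulVec_eq_smul _ _ _ (a := Complex.I) <| by
    ext i; fin_cases i <;> simp [mul_comm]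

@[simp] lemma gP_smul_pt01 : gP • pt01 = pt01 :=
  mk_smul_mk_of_mulVec_eq_smul _ _ _ (a := -Complex.I) <| by
    ext i; fin_cases i <;> simp

@[simp] lemma hP_smul_pt_zero : hP • pt 1 0 one_ne_zero = pt01 :=
  mk_smul_mk_of_mulVec_eq_smul _ _ _ (a := -1) <| by
    ext i; fin_cases i <;> simp

@[simp] lemma hP_smul_pt {b : ℂ} (hb : b ≠ 0) :
    hP • pt 1 b one_ne_zero = pt 1 (-b⁻¹) one_ne_zero :=
  mk_smul_mk_of_mulVec_eq_smul _ _ _ (a := b) <| by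
    ext i; fin_cases i <;> simp [hb]

local notation "Γ" => ({1, gP, hP, gP * hP} : Set PSL2)

local notation "𝐩" => ![pt 1 0 one_ne_zero, pt 1 Complex.I one_ne_zero, pt 1 1 one_ne_zero]

local notation "γ" => ![gP, hP, gP * hP]

lemma eq_and_mem_stabilizer_of_smul_eq {x : PSL2} (hx : x ∈ Γ) {i j : Fin 3}
    (h : x • 𝐩 j = 𝐩 i) : j = i ∧ x ∈ ({1, γ i} : Set PSL2) := by
  rcases hx with rfl | rfl | rfl | rfl <;> fin_cases i <;> fin_cases j <;>
    simp [mul_smul] at h ⊢ <;> norm_num [Complex.ext_iff] at h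

lemma eq_one_or_eq_of_mul_mul_eq_one {a b c : PSL2} (ha : a ∈ ({1, gP} : Set PSL2))
    (hb : b ∈ ({1, hP} : Set PSL2)) (hc : c ∈ ({1, gP * hP} : Set PSL2)) (habc : a * b * c = 1) :
    (a = 1 ∧ b = 1 ∧ c = 1) ∨ (a = gP ∧ b = hP ∧ c = gP * hP) := by
  have hfix (q : ProjLine) : a • b • c • q = q := by rw [← mul_smul, ← mul_smul, habc, one_smul]
  have h0 := hfix (pt 1 0 one_ne_zero)
  have h1 := hfix (pt 1 1 one_ne_zero)
  rcases ha with rfl | rfl <;> rcases hb with rfl | rfl <;> rcases hc with rfl | rfl <;>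
    simp [mul_smul, Complex.ext_iff] at h0 h1 ⊢ <;> norm_num at h1

/-- Let `Γ = {1,g,h,gh} ≅ C₂×C₂ < PSL₂(ℂ)` and let `G₃({1},Γ) < Γ ≀ S₃` be
the subgroup of elements `(f,σ)` with `f₁f₂f₃ = 1`, acting on `(ℙ¹)³` coordinatewise and by
permutation.  The stabilizer of `p = ([1:0],[1:i],[1:1])` in `G₃({1},Γ)` is exactly
`{(1,1,1), (g,h,gh)}`, of order 2. -/
theorem stabilizer_in_G3 (p : Fin 3 → ProjLine)
    (hp : p = ![pt 1 0 one_ne_zero, pt 1 Complex.I one_ne_zero, pt 1 1 one_ne_zero]) :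
    ∀ f : Fin 3 → PSL2, (∀ i, f i ∈ ({1, gP, hP, gP * hP} : Set PSL2)) →
      f 0 * f 1 * f 2 = 1 →
      ∀ σ : Equiv.Perm (Fin 3),
        ((∀ i, f i • p (σ⁻¹ i) = p i) ↔
          (σ = 1 ∧ (f = ![1, 1, 1] ∨ f = ![gP, hP, gP * hP]))) := by
  subst hp
  intro f hf hprod σ
  have hsep (i j : Fin 3) (h : f i • 𝐩 j = 𝐩 i) := eq_and_mem_stabilizer_of_smul_eq (hf i) h
  rw [forall_smul_perm_inv_eq_iff fun i j h => (hsep i j h).1]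
  refine and_congr_right fun _ => ⟨fun hfix => ?_, ?_⟩
  · have hf_eta : f = ![f 0, f 1, f 2] := by ext i; fin_cases i <;> rfl
    rw [hf_eta]
    simpa [Matrix.vecCons_inj] using eq_one_or_eq_of_mul_mul_eq_one (hsep 0 0 (hfix 0)).2
      (hsep 1 1 (hfix 1)).2 (hsep 2 2 (hfix 2)).2 hprod
  · rintro (rfl | rfl) i <;> fin_cases i <;> simp [mul_smul]
end
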